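/- Let k be a field of characteristic zero, let V be a k-vector space, and let ω_1,…,ω_r and ψ_1,…,ψ_r be elements of V such that the elementary symmetric polynomials agree: σ_i(ω_1,…,ω_r) = σ_i(ψ_1,…,ψ_r) in Sym^i(V) for all 1 ≤ i ≤ r. Then the multisets {ω_1,…,ω_r} and {ψ_1,…,ψ_r} are equal. -/
import Mathlib

open Polynomial in
/-- If the elementary symmetric functions of two `r`-tuples of vectors agree in the
symmetric algebra (modelled as an integral domain `A` into which `V` embeds linearly),
then the two multisets of vectors agree. -/
theorem stmt_2 {k : Type*} [Field k] [CharZero k]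
    {V : Type*} [AddCommGroup V] [Module k V]
    {A : Type*} [CommRing A] [IsDomain A] [Algebra k A]
    (ι : V →ₗ[k] A) (hι : Function.Injective ι)
    (r : ℕ) (ω ψ : Fin r → V)
    (h : ∀ i, 1 ≤ i → i ≤ r →
      (Multiset.map (fun x => ι (ω x)) Finset.univ.val).esymm i =
      (Multiset.map (fun x => ι (ψ x)) Finset.univ.val).esymm i) :
    Multiset.map ω Finset.univ.val = Multiset.map ψ Finset.univ.val := by
  set s : Multiset A := Multiset.map (fun x => ι (ω x)) Finset.univ.val with hs
  set t : Multiset A := Multiset.map (fun x => ι (ψ x)) Finset.univ.val with ht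
  have hcs : Multiset.card s = r := by simp [hs]
  have hct : Multiset.card t = r := by simp [ht]
  have hesymm : ∀ i, s.esymm i = t.esymm i := by
    intro i
    rcases Nat.eq_zero_or_pos i with hi | hi
    · simp [hi, Multiset.esymm]
    rcases le_or_gt i r with hir | hir
    · exact h i hi hir
    · rw [Multiset.esymm, Multiset.esymm]
      have h1 : s.powersetCard i = 0 := by
        apply Multiset.powersetCard_eq_empty
        omega
      have h2 : t.powersetCard i = 0 := by
        apply Multiset.powersetCard_eq_empty
        omega
      rw [h1, h2]
  have hprod : (s.map fun a => X - C a).prod = (t.map fun a => X - C a).prod := by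
    apply Polynomial.ext
    intro n
    rcases le_or_gt n r with hn | hn
    · rw [Multiset.prod_X_sub_C_coeff s (by omega), Multiset.prod_X_sub_C_coeff t (by omega),
        hcs, hct, hesymm]
    · have d1 : ((s.map fun a => X - C a).prod).natDegree = r := by
        rw [Polynomial.natDegree_multiset_prod_X_sub_C_eq_card, hcs]
      have d2 : ((t.map fun a => X - C a).prod).natDegree = r := by
        rw [Polynomial.natDegree_multiset_prod_X_sub_C_eq_card, hct]
      rw [Polynomial.coeff_eq_zero_of_natDegree_lt (by omega),
        Polynomial.coeff_eq_zero_of_natDegree_lt (by omega)]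
  have hst : s = t := by
    rw [← Polynomial.roots_multiset_prod_X_sub_C s, ← Polynomial.roots_multiset_prod_X_sub_C t,
      hprod]
  apply Multiset.map_injective hι
  rw [Multiset.map_map, Multiset.map_map]
  exact hst
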